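/- arXiv:2409.02404 — 2 statements merged into one kernel-verified Lean document; each statement's English description precedes it below -/
import Mathlib

section
/- Let ε > 0 and Δ > 0, and let a, a' ∈ ℝ satisfy |a − a'| ≤ Δ. Let Lap(Δ/ε) denote the Laplace measure with scale Δ/ε, and for a real number t let M(t) be the pushforward of Lap(Δ/ε) under the map x ↦ x + t. Then for every measurable set S ⊆ ℝ, M(a)(S) ≤ exp(ε) · M(a')(S). In words: releasing a real value perturbed by Laplace noise of scale Δ/ε is ε-differentially private whenever the value changes by at most Δ between adjacent inputs. -/
/-!
Translating a measure with a density translates the density. The Laplace density `p_b` satisfies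
`p_b y ≤ exp(|y - z| / b) · p_b z` by the reverse triangle inequality, so the translates of `Lap(b)`
by `a` and `a'` compare as measures with factor `exp(|a - a'| / b)`, which is at most `exp ε` when
`b = Δ / ε` and `|a - a'| ≤ Δ`.
-/

open MeasureTheory

/-- The Laplace measure with location 0 and scale `b` on `ℝ`: density
`x ↦ (1/(2b)) · exp(−|x|/b)` with respect to Lebesgue measure. -/
noncomputable def lap (b : ℝ) : Measure ℝ :=
  volume.withDensity fun x => ENNReal.ofReal ((1 / (2 * b)) * Real.exp (-|x| / b))

theorem map_add_right_withDensity {G : Type*} [MeasurableSpace G] [AddGroup G] [MeasurableAdd G]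
    (μ : Measure G) [μ.IsAddRightInvariant] (f : G → ENNReal) (t : G) :
    (μ.withDensity f).map (· + t) = μ.withDensity fun x => f (x - t) := by
  ext s hs
  rw [Measure.map_apply (measurable_add_const t) hs, withDensity_apply _ hs,
    withDensity_apply _ (hs.preimage (measurable_add_const t))]
  simpa only [add_sub_cancel_right] using
    (measurePreserving_add_right μ t).setLIntegral_comp_preimage_emb
      (measurableEmbedding_addRight t) (fun x => f (x - t)) s

noncomputable def lapDensity (b x : ℝ) : ℝ :=
  1 / (2 * b) * Real.exp (-|x| / b)

theorem lap_eq_withDensity (b : ℝ) :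
    lap b = volume.withDensity fun x => ENNReal.ofReal (lapDensity b x) := rfl

theorem lapDensity_le_exp_mul {b : ℝ} (hb : 0 ≤ b) (y z : ℝ) :
    lapDensity b y ≤ Real.exp (|y - z| / b) * lapDensity b z := by
  have h : -|y| / b ≤ |y - z| / b + -|z| / b := by
    rw [← add_div]
    gcongr
    linarith [abs_sub_abs_le_abs_sub z y, abs_sub_comm z y]
  calc lapDensity b y ≤ 1 / (2 * b) * Real.exp (|y - z| / b + -|z| / b) := by
        unfold lapDensity; gcongr
    _ = Real.exp (|y - z| / b) * lapDensity b z := by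
        rw [lapDensity, Real.exp_add]; ring

theorem lap_map_add_const_le {b : ℝ} (hb : 0 ≤ b) (a a' : ℝ) :
    (lap b).map (· + a) ≤ ENNReal.ofReal (Real.exp (|a - a'| / b)) • (lap b).map (· + a') := by
  rw [lap_eq_withDensity, map_add_right_withDensity, map_add_right_withDensity,
    ← withDensity_smul' _ _ ENNReal.ofReal_ne_top]
  refine withDensity_mono (Filter.Eventually.of_forall fun x => ?_)
  rw [Pi.smul_apply, smul_eq_mul, ← ENNReal.ofReal_mul (Real.exp_pos _).le]
  refine ENNReal.ofReal_le_ofReal ?_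
  simpa only [sub_sub_sub_cancel_left, abs_sub_comm a'] using
    lapDensity_le_exp_mul hb (x - a) (x - a')

theorem laplace_mechanism_dp_general (ε Δ a a' : ℝ) (hε : 0 < ε)
    (hadj : |a - a'| ≤ Δ) (S : Set ℝ) :
    (lap (Δ / ε)).map (fun x => x + a) S ≤
      ENNReal.ofReal (Real.exp ε) * (lap (Δ / ε)).map (fun x => x + a') S := by
  have hb : 0 ≤ Δ / ε := div_nonneg ((abs_nonneg _).trans hadj) hε.le
  have hratio : |a - a'| / (Δ / ε) ≤ ε :=
    div_le_of_le_mul₀ hb hε.le (by rwa [mul_div_cancel₀ Δ hε.ne'])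
  calc (lap (Δ / ε)).map (fun x => x + a) S
      ≤ ENNReal.ofReal (Real.exp (|a - a'| / (Δ / ε))) * (lap (Δ / ε)).map (fun x => x + a') S :=
        lap_map_add_const_le hb a a' S
    _ ≤ ENNReal.ofReal (Real.exp ε) * (lap (Δ / ε)).map (fun x => x + a') S := by gcongr

/-- The Laplace mechanism: releasing a real value perturbed by Laplace noise of scale
`Δ/ε` is `ε`-differentially private whenever the value changes by at most `Δ` between
adjacent inputs. -/
theorem laplace_mechanism_dp (ε Δ a a' : ℝ) (hε : 0 < ε) (hΔ : 0 < Δ)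
    (hadj : |a - a'| ≤ Δ) (S : Set ℝ) (hS : MeasurableSet S) :
    (lap (Δ / ε)).map (fun x => x + a) S ≤
      ENNReal.ofReal (Real.exp ε) * (lap (Δ / ε)).map (fun x => x + a') S :=
  laplace_mechanism_dp_general ε Δ a a' hε hadj S
end

section
/- Let ε > 0, let k ≥ 2 be a natural number, and let v, v' : Fin k → ℝ be vote-count vectors satisfying |v_i − v'_i| ≤ 1 for every i. Let N = (N_1, …, N_k) be independent Laplace random variables each with scale 2/ε (i.e., N is distributed according to the k-fold product of Lap(2/ε)). Then for every index j, P[∀ i ≠ j, v_j + N_j > v_i + N_i] ≤ exp(ε) · P[∀ i ≠ j, v'_j + N_j > v'_i + N_i]. In words: the noisy-argmax aggregation that outputs the class with maximal noisy vote count, with Laplace noise of scale 2/ε, is ε-differentially private whenever adjacent datasets change each vote count by at most 1. -/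
open MeasureTheory

/-!
Shifting the noise vector by `2` in coordinate `j` turns the event "`j` strictly wins under `v`"
into a subset of "`j` strictly wins under `v'`": every count moves by at most `1`, so the winner's
margin shrinks by at most `2`. A translation by `a` changes the Laplace density of scale `b` by at
most the factor `exp (|a| / b)`, so translating the product noise by `t` costs at most
`exp (∑ i, |t i| / b)`, which for `t = Pi.single j 2` and `b = 2 / ε` is `exp ε`.
-/

open scoped ENNReal

instance (b : ℝ) : SigmaFinite (lap b) := by
  unfold lap
  infer_instance

namespace MeasureTheory.Measure

variable {ι : Type*} [Fintype ι] {α : ι → Type*} [∀ i, MeasurableSpace (α i)]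

theorem pi_mono {μ ν : ∀ i, Measure (α i)} (h : ∀ i, μ i ≤ ν i) :
    Measure.pi μ ≤ Measure.pi ν := by
  refine Measure.le_iff.2 fun s hs => ?_
  rw [Measure.pi_def, Measure.pi_def, toMeasure_apply _ _ hs, toMeasure_apply _ _ hs]
  refine OuterMeasure.le_pi.2 (fun t _ => ?_) s
  exact (OuterMeasure.pi_pi_le _ t).trans (Finset.prod_le_prod' fun i _ => h i (t i))

theorem pi_smul (μ : ∀ i, Measure (α i)) [∀ i, SigmaFinite (μ i)] {c : ι → ℝ≥0∞}
    (hc : ∀ i, c i ≠ ∞) :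
    Measure.pi (fun i => c i • μ i) = (∏ i, c i) • Measure.pi μ := by
  have (i : ι) : SigmaFinite (c i • μ i) := by
    rw [← ENNReal.coe_toNNReal (hc i)]
    exact SMul.sigmaFinite _
  refine Measure.pi_eq fun s hs => ?_
  simp [Measure.pi_pi, Finset.prod_mul_distrib]

theorem map_add_right_withDensity_le {G : Type*} [MeasurableSpace G]
    [AddGroup G] [MeasurableAdd G] {μ : Measure G} [μ.IsAddRightInvariant] {f : G → ℝ≥0∞}
    (hf : Measurable f) {a : G} {c : ℝ≥0∞} (hfa : ∀ x, f (x - a) ≤ c * f x) :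
    (μ.withDensity f).map (· + a) ≤ c • μ.withDensity f := by
  refine Measure.le_iff.2 fun s hs => ?_
  rw [map_apply (measurable_add_const a) hs, withDensity_apply _ (measurable_add_const a hs),
    smul_apply, withDensity_apply _ hs, smul_eq_mul, ← lintegral_const_mul c hf]
  calc ∫⁻ x in (· + a) ⁻¹' s, f x ∂μ = ∫⁻ x in s, f (x - a) ∂μ := by
        simpa using (measurePreserving_add_right μ a).setLIntegral_comp_preimage_emb
          (measurableEmbedding_addRight a) (fun x => f (x - a)) s
    _ ≤ ∫⁻ x in s, c * f x ∂μ := lintegral_mono hfa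

end MeasureTheory.Measure

theorem lap_density_sub_le {b : ℝ} (hb : 0 < b) (x a : ℝ) :
    1 / (2 * b) * Real.exp (-|x - a| / b) ≤
      Real.exp (|a| / b) * (1 / (2 * b) * Real.exp (-|x| / b)) := by
  rw [mul_left_comm, ← Real.exp_add]
  gcongr
  rw [← add_div, div_le_div_iff_of_pos_right hb]
  linarith [abs_sub_abs_le_abs_sub x a]

theorem lap_map_add_le {b : ℝ} (hb : 0 < b) (a : ℝ) :
    (lap b).map (· + a) ≤ ENNReal.ofReal (Real.exp (|a| / b)) • lap b :=
  Measure.map_add_right_withDensity_le (by fun_prop) fun x => by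
    rw [← ENNReal.ofReal_mul (Real.exp_nonneg _)]
    exact ENNReal.ofReal_le_ofReal (lap_density_sub_le hb x a)

theorem pi_lap_map_add_le {ι : Type*} [Fintype ι] {b : ℝ} (hb : 0 < b) (t : ι → ℝ) :
    (Measure.pi fun _ : ι => lap b).map (· + t) ≤
      ENNReal.ofReal (Real.exp ((∑ i, |t i|) / b)) • Measure.pi fun _ : ι => lap b := by
  have (i : ι) : SigmaFinite ((lap b).map (· + t i)) :=
    (measurableEmbedding_addRight (t i)).sigmaFinite_map
  calc (Measure.pi fun _ : ι => lap b).map (fun N i => N i + t i)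
      = Measure.pi fun i => (lap b).map (· + t i) :=
        Measure.pi_map_pi fun i => (measurable_add_const (t i)).aemeasurable
    _ ≤ Measure.pi fun i => ENNReal.ofReal (Real.exp (|t i| / b)) • lap b :=
        Measure.pi_mono fun i => lap_map_add_le hb (t i)
    _ = _ := by
        rw [Measure.pi_smul _ fun i => ENNReal.ofReal_ne_top, ← ENNReal.ofReal_prod_of_nonneg
          fun i _ => Real.exp_nonneg _, ← Real.exp_sum, Finset.sum_div]

theorem setOf_strict_max_subset_preimage_add_single {ι : Type*} [DecidableEq ι] {v v' : ι → ℝ}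
    (hadj : ∀ i, |v i - v' i| ≤ 1) (j : ι) :
    {N : ι → ℝ | ∀ i, i ≠ j → v i + N i < v j + N j} ⊆
      (· + Pi.single j 2) ⁻¹' {N : ι → ℝ | ∀ i, i ≠ j → v' i + N i < v' j + N j} := by
  intro N hN i hij
  have := hN i hij
  have := abs_le.1 (hadj i)
  have := abs_le.1 (hadj j)
  simp only [Pi.add_apply, Pi.single_eq_same, Pi.single_eq_of_ne hij]
  linarith

theorem noisy_argmax_dp_general (ε : ℝ) (hε : 0 < ε) (k : ℕ)
    (v v' : Fin k → ℝ) (hadj : ∀ i, |v i - v' i| ≤ 1) (j : Fin k) :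
    (Measure.pi fun _ : Fin k => lap (2 / ε))
        {N | ∀ i, i ≠ j → v i + N i < v j + N j} ≤
      ENNReal.ofReal (Real.exp ε) *
        (Measure.pi fun _ : Fin k => lap (2 / ε))
          {N | ∀ i, i ≠ j → v' i + N i < v' j + N j} := by
  set μ := Measure.pi fun _ : Fin k => lap (2 / ε)
  have hcost : (∑ i, |Pi.single j (2 : ℝ) i|) / (2 / ε) = ε := by
    simp [Pi.single_apply, apply_ite (abs : ℝ → ℝ)]
  calc μ {N | ∀ i, i ≠ j → v i + N i < v j + N j}
      ≤ μ ((· + Pi.single j 2) ⁻¹' {N | ∀ i, i ≠ j → v' i + N i < v' j + N j}) :=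
        measure_mono (setOf_strict_max_subset_preimage_add_single hadj j)
    _ ≤ μ.map (· + Pi.single j 2) {N | ∀ i, i ≠ j → v' i + N i < v' j + N j} :=
        Measure.le_map_apply (measurable_add_const _).aemeasurable _
    _ ≤ _ := by
        simpa only [hcost, Measure.smul_apply, smul_eq_mul] using
          pi_lap_map_add_le (b := 2 / ε) (by positivity) (Pi.single j (2 : ℝ)) _

/-- Noisy-argmax aggregation with independent Laplace noise of scale `2/ε` on each vote
count is `ε`-differentially private when adjacent datasets change each count by at most 1:
for every class `j`, the probability that `j` has the strictly largest noisy count changes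
by at most a factor `exp ε`. -/
theorem noisy_argmax_dp (ε : ℝ) (hε : 0 < ε) (k : ℕ) (hk : 2 ≤ k)
    (v v' : Fin k → ℝ) (hadj : ∀ i, |v i - v' i| ≤ 1) (j : Fin k) :
    (Measure.pi fun _ : Fin k => lap (2 / ε))
        {N | ∀ i, i ≠ j → v i + N i < v j + N j} ≤
      ENNReal.ofReal (Real.exp ε) *
        (Measure.pi fun _ : Fin k => lap (2 / ε))
          {N | ∀ i, i ≠ j → v' i + N i < v' j + N j} :=
  noisy_argmax_dp_general ε hε k v v' hadj j
end
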